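/- Let d ≥ 3 and k ≥ 2 be integers and let d_0, d_1, …, d_k be natural numbers with Σ_{j=0}^k d_j = d and d_k ≤ d − 1. Let x_min > 0 be a real, let x be a real with k·x_min ≤ x < (k+1)·x_min, and let π₀ be a real with π₀ ≥ d·G(k) + 2k − 1, where G(m) = (d^m − 1)/(d − 1). Define Q = x + Σ_{j=1}^k d_j·G(j)·(x − (j−1)·x_min) and W = π₀ + 1 + Σ_{j=1}^k d_j·G(j). Then (2x − (2k − 1)·x_min)·W > 2·Q. -/

import Mathlib

/-- Number of nodes in the first `m` levels of a complete `d`-ary tree. -/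
noncomputable def G (d m : ℕ) : ℝ := ((d : ℝ) ^ m - 1) / ((d : ℝ) - 1)

/-!
Write `a = 2x − (2k − 1)·x_min`. The `x`-dependence of `a·Σ d_j G(j)` and `2·Σ d_j G(j)(x − (j − 1)x_min)`
cancels, leaving `a·W − 2Q = a·π₀ − (2k − 1)·x_min − x_min·Σ d_j G(j)(2k + 1 − 2j)`.
Since `a ≥ x_min`, the bound on `π₀` makes the first two terms at least `x_min·d·G(k)`.
For the weighted sum, `G(k) = d^{k−j} G(j) + G(k − j)` and `d^{k−j} ≥ 2(k − j) + 1` give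
`(2k + 1 − 2j)·G(j) ≤ G(k) − 1` for `j < k`, so the sum is at most `d·(G(k) − 1) + d_k < d·G(k)`.
-/

open Finset

section G

variable {d : ℕ}

theorem G_eq_geom_sum (hd : d ≠ 1) (m : ℕ) : G d m = ∑ i ∈ range m, (d : ℝ) ^ i :=
  (geom_sum_eq (by exact_mod_cast hd) m).symm

theorem G_nonneg (hd : d ≠ 1) (m : ℕ) : 0 ≤ G d m := by
  rw [G_eq_geom_sum hd]
  positivity

theorem one_le_G (hd : d ≠ 1) {m : ℕ} (hm : 1 ≤ m) : 1 ≤ G d m := by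
  rw [G_eq_geom_sum hd]
  simpa using single_le_sum (f := fun i => (d : ℝ) ^ i) (fun i _ => by positivity) (mem_range.2 hm)

theorem G_add (hd : d ≠ 1) (m j : ℕ) : G d (m + j) = G d m + (d : ℝ) ^ m * G d j := by
  simp only [G_eq_geom_sum hd, sum_range_add, mul_sum, pow_add]

theorem two_mul_add_one_le_pow (hd : 3 ≤ d) (m : ℕ) : 2 * (m : ℝ) + 1 ≤ (d : ℝ) ^ m := by
  have h3 : (3 : ℝ) ≤ d := by exact_mod_cast hd
  calc 2 * (m : ℝ) + 1 = 1 + m * 2 := by ring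
    _ ≤ (1 + 2) ^ m := one_add_mul_le_pow (by norm_num) m
    _ ≤ (d : ℝ) ^ m := pow_le_pow_left₀ (by norm_num) (by linarith) m

theorem mul_G_le_G_sub_one (hd : 3 ≤ d) {j k : ℕ} (hjk : j < k) :
    (2 * (k : ℝ) + 1 - 2 * j) * G d j ≤ G d k - 1 := by
  have hd1 : d ≠ 1 := by omega
  obtain ⟨m, rfl⟩ : ∃ m, k = (m + 1) + j := ⟨k - j - 1, by omega⟩
  have hpow := two_mul_add_one_le_pow hd (m + 1)
  have hGj := G_nonneg hd1 j
  have hGm := one_le_G hd1 (Nat.le_add_left 1 m)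
  rw [G_add hd1]
  push_cast at hpow ⊢
  nlinarith

theorem sum_mul_G_mul_le (hd : 3 ≤ d) {k : ℕ} (hk : 1 ≤ k) (dv : ℕ → ℕ)
    (hsum : ∑ j ∈ Icc 1 k, dv j ≤ d) (hdk : dv k < d) :
    ∑ j ∈ Icc 1 k, (dv j : ℝ) * G d j * (2 * k + 1 - 2 * j) ≤ d * G d k - 1 := by
  have hGk := one_le_G (d := d) (by omega) hk
  have hterm : ∀ j ∈ Icc 1 k, (dv j : ℝ) * G d j * (2 * k + 1 - 2 * j)
      ≤ dv j * (G d k - 1) + if j = k then (dv j : ℝ) else 0 := by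
    intro j hj
    rcases (mem_Icc.1 hj).2.lt_or_eq with hjk | rfl
    · rw [if_neg hjk.ne, add_zero, mul_assoc, mul_comm (G d j)]
      exact mul_le_mul_of_nonneg_left (mul_G_le_G_sub_one hd hjk) (Nat.cast_nonneg _)
    · rw [if_pos rfl]
      exact le_of_eq (by ring)
  have hsumR : ((∑ j ∈ Icc 1 k, dv j : ℕ) : ℝ) ≤ d := by exact_mod_cast hsum
  have hdkR : (dv k : ℝ) + 1 ≤ d := by exact_mod_cast hdk
  calc ∑ j ∈ Icc 1 k, (dv j : ℝ) * G d j * (2 * k + 1 - 2 * j)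
      ≤ ∑ j ∈ Icc 1 k, ((dv j : ℝ) * (G d k - 1) + if j = k then (dv j : ℝ) else 0) :=
        sum_le_sum hterm
    _ = ((∑ j ∈ Icc 1 k, dv j : ℕ) : ℝ) * (G d k - 1) + dv k := by
        rw [sum_add_distrib, sum_ite_eq', if_pos (mem_Icc.2 ⟨hk, le_rfl⟩), Nat.cast_sum, sum_mul]
    _ ≤ d * (G d k - 1) + (d - 1) :=
        add_le_add (mul_le_mul_of_nonneg_right hsumR (by linarith)) (by linarith)
    _ = d * G d k - 1 := by ring

end G

theorem stmt_10_general (d k : ℕ) (hd : 3 ≤ d) (hk : 2 ≤ k)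
    (dv : ℕ → ℕ) (hsum : ∑ j ∈ Finset.range (k + 1), dv j = d) (hdk : dv k ≤ d - 1)
    (xmin x π₀ : ℝ) (hxmin : 0 < xmin)
    (hx1 : (k : ℝ) * xmin ≤ x)
    (hπ : (d : ℝ) * G d k + 2 * (k : ℝ) - 1 ≤ π₀) :
    (2 * x - (2 * (k : ℝ) - 1) * xmin) *
        (π₀ + 1 + ∑ j ∈ Finset.Icc 1 k, (dv j : ℝ) * G d j)
      > 2 * (x + ∑ j ∈ Finset.Icc 1 k, (dv j : ℝ) * G d j * (x - ((j : ℝ) - 1) * xmin)) := by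
  set a := 2 * x - (2 * (k : ℝ) - 1) * xmin
  set P := ∑ j ∈ Icc 1 k, (dv j : ℝ) * G d j * (2 * k + 1 - 2 * j)
  have hcancel : a * ∑ j ∈ Icc 1 k, (dv j : ℝ) * G d j
      - 2 * ∑ j ∈ Icc 1 k, (dv j : ℝ) * G d j * (x - ((j : ℝ) - 1) * xmin) = -(xmin * P) := by
    simp only [P, mul_sum, ← sum_sub_distrib, ← sum_neg_distrib]
    exact sum_congr rfl fun j _ => by ring
  have hP : P ≤ d * G d k - 1 := by
    refine sum_mul_G_mul_le hd (by omega) dv (hsum ▸ sum_le_sum_of_subset ?_) (by omega)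
    intro j hj
    simp only [mem_Icc, mem_range] at hj ⊢
    omega
  have hGk := G_nonneg (d := d) (by omega) k
  have hk1 : (1 : ℝ) ≤ k := by exact_mod_cast (by omega : 1 ≤ k)
  have hπ₀ : 0 ≤ π₀ := by nlinarith
  have ha : xmin ≤ a := by linarith
  linarith [mul_nonneg (sub_nonneg.2 ha) hπ₀, mul_le_mul_of_nonneg_left hP hxmin.le,
    mul_le_mul_of_nonneg_left hπ hxmin.le]

/-- Claim 2 of the paper (with `d_k ≤ d − 1` added for strictness):
`(2x − (2k − 1)·x_min)·W > 2·Q`, i.e. `(1 + 2ε)·W·x_min > 2Q` for `x = (k + ε)·x_min`. -/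
theorem stmt_10 (d k : ℕ) (hd : 3 ≤ d) (hk : 2 ≤ k)
    (dv : ℕ → ℕ) (hsum : ∑ j ∈ Finset.range (k + 1), dv j = d) (hdk : dv k ≤ d - 1)
    (xmin x π₀ : ℝ) (hxmin : 0 < xmin)
    (hx1 : (k : ℝ) * xmin ≤ x) (hx2 : x < ((k : ℝ) + 1) * xmin)
    (hπ : (d : ℝ) * G d k + 2 * (k : ℝ) - 1 ≤ π₀) :
    (2 * x - (2 * (k : ℝ) - 1) * xmin) *
        (π₀ + 1 + ∑ j ∈ Finset.Icc 1 k, (dv j : ℝ) * G d j)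
      > 2 * (x + ∑ j ∈ Finset.Icc 1 k, (dv j : ℝ) * G d j * (x - ((j : ℝ) - 1) * xmin)) :=
  stmt_10_general d k hd hk dv hsum hdk xmin x π₀ hxmin hx1 hπ
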